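/- Let M be a matroid with finitarization N that is nearly finitary but not n-nearly finitary for any n ∈ ℕ (for every n there exist a base F of N and a base B of M with B ⊆ F and n < (F \ B).encard). Let S ⊆ E(M) be a finite set and let P be the finitarization of the deletion M ＼ S (Mathlib's Matroid.delete). Then M ＼ S is nearly finitary but not n-nearly finitary for any n: for every base F of P and base B of M ＼ S with B ⊆ F, F \ B is finite, and for every n ∈ ℕ there exist a base F of P and a base B of M ＼ S with B ⊆ F and n < (F \ B).encard. -/

import Mathlib

/-!
Deleting a finite set `S` moves bases only a little: every base of `M ＼ S` extends to a base of
`M` by adding elements of `S`, and every base of `M` meets `M.E \ S` in an independent set that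
extends to a base of `M ＼ S` by at most `|S|` elements, since bases have equally large
differences. Hence a pair `B ⊆ F` of bases of `M ＼ S` and of its finitarization, which is
`N ＼ S`, can be compared with a pair `B₀ ⊆ F₀` of bases of `M` and `N` so that `|F \ B|` and
`|F₀ \ B₀|` differ by at most `3|S|`, in both directions.
-/

/-- `N` is the finitarization of `M`: same ground set, and a subset of the ground set is
independent in `N` iff all of its finite subsets are independent in `M`. -/
def IsFinitarization {α : Type*} (N M : Matroid α) : Prop :=
  N.E = M.E ∧ ∀ S ⊆ M.E, (N.Indep S ↔ ∀ J ⊆ S, J.Finite → M.Indep J)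

/-- The deletion `M ＼ X` of a set `X` from a matroid `M`: the restriction of `M`
to `M.E \ X`. -/
def Matroid.del {α : Type*} (M : Matroid α) (X : Set α) : Matroid α := M.restrict (M.E \ X)

open Matroid Set

lemma Matroid.del_eq_delete {α : Type*} (M : Matroid α) (X : Set α) : M.del X = M ＼ X := rfl

namespace IsFinitarization

variable {α : Type*} {M N P : Matroid α}

lemma indep_of_indep (hN : IsFinitarization N M) {I : Set α} (hI : M.Indep I) : N.Indep I :=
  (hN.2 I hI.subset_ground).2 fun _ hJ _ ↦ hI.subset hJ

lemma unique (hN : IsFinitarization N M) (hP : IsFinitarization P M) : N = P :=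
  Matroid.ext_indep (hN.1.trans hP.1.symm) fun I hI ↦ by
    rw [hN.1] at hI
    rw [hN.2 I hI, hP.2 I hI]

lemma delete (hN : IsFinitarization N M) (S : Set α) : IsFinitarization (N ＼ S) (M ＼ S) := by
  refine ⟨by rw [Matroid.delete_ground, Matroid.delete_ground, hN.1], fun I hI ↦ ?_⟩
  have hIS : Disjoint I S := (subset_sdiff.1 hI).2
  simp only [Matroid.delete_indep_iff, hN.2 I (hI.trans sdiff_subset), hIS, and_true]
  exact forall₂_congr fun J hJ ↦ by simp [hIS.mono_left hJ]

end IsFinitarization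

namespace Matroid

variable {α : Type*} {M N : Matroid α} {S I B F B₀ F₀ : Set α}

lemma Indep.exists_isBase_superset_encard_sdiff_le (hI : M.Indep I) (hB : M.IsBase B) :
    ∃ B', M.IsBase B' ∧ I ⊆ B' ∧ (B \ B').encard ≤ (I \ B).encard := by
  obtain ⟨B', hB', hIB', hB'IB⟩ := hI.exists_isBase_subset_union_isBase hB
  refine ⟨B', hB', hIB', ?_⟩
  rw [hB.encard_sdiff_comm hB']
  exact encard_le_encard fun x hx ↦ ⟨(hB'IB hx.1).resolve_right hx.2, hx.2⟩

lemma Indep.encard_sdiff_le_of_isBase (hI : M.Indep I) (hB : M.IsBase B) :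
    (I \ B).encard ≤ (B \ I).encard := by
  obtain ⟨B', hB', hIB', hB'IB⟩ := hI.exists_isBase_subset_union_isBase hB
  calc (I \ B).encard ≤ (B' \ B).encard := encard_le_encard (sdiff_subset_sdiff_left hIB')
    _ = (B \ B').encard := hB'.encard_sdiff_comm hB
    _ ≤ (B \ I).encard := encard_le_encard (sdiff_subset_sdiff_right hIB')

lemma IsBase.exists_isBase_of_delete (hB : (M ＼ S).IsBase B) :
    ∃ B₀, M.IsBase B₀ ∧ B ⊆ B₀ ∧ B₀ \ B ⊆ S := by
  obtain ⟨B₀, hB₀, rfl⟩ := (delete_isBase_iff.1 hB).exists_isBase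
  refine ⟨B₀, hB₀, inter_subset_left, fun x hx ↦ ?_⟩
  by_contra hxS
  exact hx.2 ⟨hx.1, hB₀.subset_ground hx.1, hxS⟩

lemma IsBase.exists_isBase_delete (hB : M.IsBase B) (S : Set α) :
    ∃ B', (M ＼ S).IsBase B' ∧ B \ S ⊆ B' := by
  obtain ⟨B', hB', hBB'⟩ := (hB.indep.subset sdiff_subset).subset_isBasis_of_subset
    (sdiff_subset_sdiff_left hB.subset_ground) sdiff_subset
  exact ⟨B', delete_isBase_iff.2 hB', hBB'⟩

lemma exists_isBase_pair_of_delete (hMN : ∀ I, M.Indep I → N.Indep I)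
    (hF : (N ＼ S).IsBase F) (hB : (M ＼ S).IsBase B) (hBF : B ⊆ F) :
    ∃ F₀ B₀, N.IsBase F₀ ∧ M.IsBase B₀ ∧ B₀ ⊆ F₀ ∧
      (F \ B).encard ≤ (F₀ \ B₀).encard + 2 * S.encard := by
  obtain ⟨B₀, hB₀, -, hB₀S⟩ := hB.exists_isBase_of_delete
  obtain ⟨F', hF', hFF', -⟩ := hF.exists_isBase_of_delete
  obtain ⟨F₀, hF₀, hB₀F₀, hF'F₀⟩ :=
    (hMN _ hB₀.indep).exists_isBase_superset_encard_sdiff_le hF'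
  refine ⟨F₀, B₀, hF₀, hB₀, hB₀F₀, ?_⟩
  have hF'F₀S : (F' \ F₀).encard ≤ S.encard :=
    hF'F₀.trans (encard_le_encard ((sdiff_subset_sdiff_right (hBF.trans hFF')).trans hB₀S))
  have hcover : F \ B ⊆ (F' \ F₀) ∪ (F₀ \ B₀) ∪ (B₀ \ B) := by
    intro x ⟨hxF, hxB⟩
    by_cases hxF₀ : x ∈ F₀ <;> by_cases hxB₀ : x ∈ B₀ <;> simp_all [hFF' hxF]
  calc (F \ B).encard ≤ ((F' \ F₀) ∪ (F₀ \ B₀) ∪ (B₀ \ B)).encard := encard_le_encard hcover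
    _ ≤ (F' \ F₀).encard + (F₀ \ B₀).encard + (B₀ \ B).encard :=
      (encard_union_le _ _).trans (add_le_add_left (encard_union_le _ _) _)
    _ ≤ S.encard + (F₀ \ B₀).encard + S.encard := by gcongr
    _ = (F₀ \ B₀).encard + 2 * S.encard := by ring

lemma exists_isBase_pair_delete (hMN : ∀ I, M.Indep I → N.Indep I) (S : Set α)
    (hF₀ : N.IsBase F₀) (hB₀ : M.IsBase B₀) (hB₀F₀ : B₀ ⊆ F₀) :
    ∃ F B, (N ＼ S).IsBase F ∧ (M ＼ S).IsBase B ∧ B ⊆ F ∧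
      (F₀ \ B₀).encard ≤ (F \ B).encard + 3 * S.encard := by
  obtain ⟨B, hB, hB₀B⟩ := hB₀.exists_isBase_delete S
  obtain ⟨F', hF', hF₀F'⟩ := hF₀.exists_isBase_delete S
  have hBS : Disjoint B S := (subset_sdiff.1 hB.subset_ground).2
  have hBN : (N ＼ S).Indep B := delete_indep_iff.2 ⟨hMN _ hB.indep.of_delete, hBS⟩
  obtain ⟨F, hF, hBF, hF'F⟩ := hBN.exists_isBase_superset_encard_sdiff_le hF'
  refine ⟨F, B, hF, hB, hBF, ?_⟩
  have hBB₀ : (B \ B₀).encard ≤ S.encard :=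
    (hB.indep.of_delete.encard_sdiff_le_of_isBase hB₀).trans
      (encard_le_encard fun x hx ↦ by_contra fun hxS ↦ hx.2 (hB₀B ⟨hx.1, hxS⟩))
  have hBF' : B \ F' ⊆ B \ B₀ := fun x hx ↦
    ⟨hx.1, fun hxB₀ ↦ hx.2 (hF₀F' ⟨hB₀F₀ hxB₀, hBS.notMem_of_mem_left hx.1⟩)⟩
  have hF'FS : (F' \ F).encard ≤ S.encard := hF'F.trans ((encard_le_encard hBF').trans hBB₀)
  have hcover : F₀ \ B₀ ⊆ (F \ B) ∪ (F' \ F) ∪ (B \ B₀) ∪ S := by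
    intro x ⟨hxF₀, hxB₀⟩
    by_cases hxS : x ∈ S
    · exact Or.inr hxS
    have hxF' := hF₀F' ⟨hxF₀, hxS⟩
    by_cases hxF : x ∈ F <;> by_cases hxB : x ∈ B <;> simp_all
  calc (F₀ \ B₀).encard ≤ ((F \ B) ∪ (F' \ F) ∪ (B \ B₀) ∪ S).encard := encard_le_encard hcover
    _ ≤ (F \ B).encard + (F' \ F).encard + (B \ B₀).encard + S.encard :=
      (encard_union_le _ _).trans <| add_le_add_left ((encard_union_le _ _).trans <|
        add_le_add_left (encard_union_le _ _) _) _
    _ ≤ (F \ B).encard + S.encard + S.encard + S.encard := by gcongr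
    _ = (F \ B).encard + 3 * S.encard := by ring

end Matroid

theorem stmt_10_general {α : Type*} (M N : Matroid α) (hfin : IsFinitarization N M)
    (hnearly : ∀ F B, N.IsBase F → M.IsBase B → B ⊆ F → (F \ B).Finite)
    (hnotk : ∀ n : ℕ, ∃ F B, N.IsBase F ∧ M.IsBase B ∧ B ⊆ F ∧ (n : ℕ∞) < (F \ B).encard)
    (S : Set α) (hSfin : S.Finite)
    (P : Matroid α) (hP : IsFinitarization P (M.del S)) :
    (∀ F B, P.IsBase F → (M.del S).IsBase B → B ⊆ F → (F \ B).Finite) ∧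
      (∀ n : ℕ, ∃ F B, P.IsBase F ∧ (M.del S).IsBase B ∧ B ⊆ F ∧ (n : ℕ∞) < (F \ B).encard) := by
  rw [Matroid.del_eq_delete] at hP ⊢
  obtain rfl : P = N ＼ S := hP.unique (hfin.delete S)
  have hMN : ∀ I, M.Indep I → N.Indep I := fun _ ↦ hfin.indep_of_indep
  refine ⟨fun F B hF hB hBF ↦ ?_, fun n ↦ ?_⟩
  · obtain ⟨F₀, B₀, hF₀, hB₀, hB₀F₀, hle⟩ := Matroid.exists_isBase_pair_of_delete hMN hF hB hBF
    rw [← encard_lt_top_iff]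
    refine hle.trans_lt (ENat.add_lt_top.2 ⟨(hnearly F₀ B₀ hF₀ hB₀ hB₀F₀).encard_lt_top, ?_⟩)
    exact WithTop.mul_lt_top (by decide) hSfin.encard_lt_top
  · obtain ⟨F₀, B₀, hF₀, hB₀, hB₀F₀, hlt⟩ := hnotk (n + 3 * S.ncard)
    obtain ⟨F, B, hF, hB, hBF, hle⟩ := Matroid.exists_isBase_pair_delete hMN S hF₀ hB₀ hB₀F₀
    rw [← hSfin.cast_ncard_eq] at hle
    have hlt' : (n : ℕ∞) + 3 * S.ncard < (F \ B).encard + 3 * S.ncard := by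
      exact_mod_cast hlt.trans_le hle
    exact ⟨F, B, hF, hB, hBF, lt_of_add_lt_add_right hlt'⟩

/-- If `M` is nearly finitary but not `n`-nearly finitary for any `n`, and
`S ⊆ M.E` is finite, then the deletion `M ＼ S` is nearly finitary but not `n`-nearly
finitary for any `n`. -/
theorem stmt_10 {α : Type*} (M N : Matroid α) (hfin : IsFinitarization N M)
    (hnearly : ∀ F B, N.IsBase F → M.IsBase B → B ⊆ F → (F \ B).Finite)
    (hnotk : ∀ n : ℕ, ∃ F B, N.IsBase F ∧ M.IsBase B ∧ B ⊆ F ∧ (n : ℕ∞) < (F \ B).encard)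
    (S : Set α) (hS : S ⊆ M.E) (hSfin : S.Finite)
    (P : Matroid α) (hP : IsFinitarization P (M.del S)) :
    (∀ F B, P.IsBase F → (M.del S).IsBase B → B ⊆ F → (F \ B).Finite) ∧
      (∀ n : ℕ, ∃ F B, P.IsBase F ∧ (M.del S).IsBase B ∧ B ⊆ F ∧ (n : ℕ∞) < (F \ B).encard) :=
  stmt_10_general M N hfin hnearly hnotk S hSfin P hP
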